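/- Let γ : S¹ → ℝ³ be a smooth immersed closed curve with no vertical tangent lines, and suppose the curvature k̄ of the projection curve γ̄ := P_xy ∘ γ is positive everywhere. Then the curvature k := |γ_ss| of the space curve γ is positive everywhere. -/

import Mathlib

open Set

/-- Arc-length derivative along the curve `c` applied to the (possibly vector valued)
function `f`: `∂f/∂s := |∂c/∂u|⁻¹ ∂f/∂u`. -/
noncomputable def aderiv {E F : Type*} [NormedAddCommGroup E] [NormedSpace ℝ E]
    [NormedAddCommGroup F] [NormedSpace ℝ F]
    (c : ℝ → E) (f : ℝ → F) (u : ℝ) : F :=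
  ‖deriv c u‖⁻¹ • deriv f u

/-- Orthogonal projection of `ℝⁿ` onto the first two coordinates. -/
noncomputable def Pxy {n : ℕ} (x : EuclideanSpace ℝ (Fin n)) : EuclideanSpace ℝ (Fin 2) :=
  WithLp.toLp 2 (fun i : Fin 2 => if h : (i : ℕ) < n then x ⟨i, h⟩ else 0)

/-- A `2π`-periodic curve is simple: injective on a period. -/
def SimpleOnPeriod {α : Type*} (f : ℝ → α) : Prop :=
  ∀ u ∈ Set.Ico (0:ℝ) (2*Real.pi), ∀ v ∈ Set.Ico (0:ℝ) (2*Real.pi), f u = f v → u = v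

/-- A continuous closed plane curve is convex if it is simple and its image is the
frontier of the convex hull of its image. -/
def IsConvexCurve (c : ℝ → EuclideanSpace ℝ (Fin 2)) : Prop :=
  SimpleOnPeriod c ∧ Set.range c = frontier (convexHull ℝ (Set.range c))

/-- A closed plane curve is uniformly convex if it is simple, immersed, and its
curvature `k̄ = ‖γ̄_s̄s̄‖` is positive everywhere. -/
def IsUniformlyConvexCurve (c : ℝ → EuclideanSpace ℝ (Fin 2)) : Prop :=
  SimpleOnPeriod c ∧ (∀ u, deriv c u ≠ 0) ∧ ∀ u, 0 < ‖aderiv c (aderiv c c) u‖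

/-- A solution of the Space Curve Shortening flow on `[0,T)` in `ℝⁿ`. -/
structure IsCSF (n : ℕ) (T : ℝ) (γ : ℝ → ℝ → EuclideanSpace ℝ (Fin n)) : Prop where
  smooth : ContDiffOn ℝ (⊤ : ℕ∞) (fun p : ℝ × ℝ => γ p.1 p.2) (Set.univ ×ˢ Set.Ico 0 T)
  periodic : ∀ u t, γ (u + 2*Real.pi) t = γ u t
  immersed : ∀ (u : ℝ), ∀ t ∈ Set.Ico (0:ℝ) T, deriv (fun v => γ v t) u ≠ 0
  flow : ∀ (u : ℝ), ∀ t ∈ Set.Ico (0:ℝ) T,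
    derivWithin (fun τ => γ u τ) (Set.Ico 0 T) t
      = aderiv (fun v => γ v t) (fun v => aderiv (fun w => γ w t) (fun w => γ w t) v) u

/-- Counterclockwise rotation of a plane vector by `π/2`. -/
noncomputable def rot90 (w : EuclideanSpace ℝ (Fin 2)) : EuclideanSpace ℝ (Fin 2) :=
  (WithLp.equiv 2 (Fin 2 → ℝ)).symm ![-(w 1), w 0]

/-- Signed curvature of a plane curve, defined by `γ̄_s̄s̄ = k̄ N̄` with `N̄ = rot90 T̄`. -/
noncomputable def signedCurv (c : ℝ → EuclideanSpace ℝ (Fin 2)) (u : ℝ) : ℝ :=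
  inner ℝ (aderiv c (aderiv c c) u) (rot90 (aderiv c c u))

/-- There exist `k` points `u₁ < ⋯ < u_k < u₁ + 2π` on which `h` changes sign cyclically. -/
def SignChangeSeq (h : ℝ → ℝ) (k : ℕ) : Prop :=
  ∃ u : ℕ → ℝ, (∀ i j, i < j → j < k → u i < u j) ∧
    (0 < k → u (k-1) < u 0 + 2*Real.pi) ∧
    (∀ i, i+1 < k → h (u i) * h (u (i+1)) < 0) ∧
    (0 < k → h (u (k-1)) * h (u 0) < 0)

/-- The sign-changing number of a `2π`-periodic function. -/
noncomputable def signChanges (h : ℝ → ℝ) : ℕ∞ :=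
  sSup {N : ℕ∞ | ∃ k : ℕ, N = (k : ℕ∞) ∧ SignChangeSeq h k}

/-- The three-point condition with constant `Δ`: every affine plane meeting the curve in
at least three parameter values (per period) has slope at most `Δ`. -/
def ThreePointCond (γ : ℝ → EuclideanSpace ℝ (Fin 3)) (Δ : ℝ) : Prop :=
  ∀ (m : EuclideanSpace ℝ (Fin 3)) (d : ℝ), m ≠ 0 →
    (3 : ℕ∞) ≤ ({u ∈ Set.Ico (0:ℝ) (2*Real.pi) | (inner ℝ m (γ u) : ℝ) = d}).encard →
    Real.sqrt ((m 0)^2 + (m 1)^2) ≤ Δ * |m 2|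

open scoped RealInnerProductSpace ContDiff

section Statement17Aux

/-- `Pxy` on `ℝ³` as a continuous linear map. -/
noncomputable def PxyL : EuclideanSpace ℝ (Fin 3) →L[ℝ] EuclideanSpace ℝ (Fin 2) :=
  LinearMap.toContinuousLinearMap
  { toFun := Pxy
    map_add' := by
      intro x y
      ext i
      show (if h : (i : ℕ) < 3 then (x + y) ⟨i, h⟩ else 0)
        = (if h : (i : ℕ) < 3 then x ⟨i, h⟩ else 0) + (if h : (i : ℕ) < 3 then y ⟨i, h⟩ else 0)
      split
      · rfl
      · simp
    map_smul' := by
      intro c x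
      ext i
      show (if h : (i : ℕ) < 3 then (c • x) ⟨i, h⟩ else 0)
        = c • (if h : (i : ℕ) < 3 then x ⟨i, h⟩ else 0)
      split
      · rfl
      · simp }

lemma PxyL_apply (x : EuclideanSpace ℝ (Fin 3)) : PxyL x = Pxy x := rfl

end Statement17Aux

/-- If a smooth immersed closed curve in `ℝ³` has no vertical tangent lines
and its projection curve has everywhere positive curvature, then the space curve itself has
everywhere positive curvature. -/
theorem statement17
    (γ : ℝ → EuclideanSpace ℝ (Fin 3))
    (hsm : ContDiff ℝ (⊤ : ℕ∞) γ)
    (hper : ∀ u, γ (u + 2*Real.pi) = γ u)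
    (himm : ∀ u, deriv γ u ≠ 0)
    (hvert : ∀ u, Pxy (deriv γ u) ≠ 0)
    (hkbar : ∀ u : ℝ, 0 < ‖aderiv (fun w => Pxy (γ w))
        (aderiv (fun w => Pxy (γ w)) (fun w => Pxy (γ w))) u‖) :
    ∀ u : ℝ, 0 < ‖aderiv γ (aderiv γ γ) u‖ := by
  have hdiff : Differentiable ℝ γ := hsm.differentiable (by simp)
  have hsm' : ContDiff ℝ (∞ : WithTop ℕ∞) γ := hsm.of_le (by simp)
  have hγ' : ContDiff ℝ (∞ : WithTop ℕ∞) (deriv γ) := (contDiff_infty_iff_deriv.mp hsm').2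
  have hdiff' : Differentiable ℝ (deriv γ) := hγ'.differentiable (by simp)
  intro u
  by_contra hcon
  have h0 : aderiv γ (aderiv γ γ) u = 0 := by
    have h1 : ‖aderiv γ (aderiv γ γ) u‖ = 0 :=
      le_antisymm (not_lt.mp hcon) (norm_nonneg _)
    exact norm_eq_zero.mp h1
  have hnc' : ‖deriv γ u‖ ≠ 0 := norm_ne_zero_iff.mpr (himm u)
  have hD0 : deriv (aderiv γ γ) u = 0 := by
    rcases smul_eq_zero.mp h0 with h | h
    · exact absurd h (inv_ne_zero hnc')
    · exact h
  set g : ℝ → ℝ := fun v => ‖deriv γ v‖⁻¹ with hgdef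
  have hgu : g u ≠ 0 := inv_ne_zero hnc'
  have hgd : DifferentiableAt ℝ g u :=
    (((hdiff' u).norm ℝ (himm u)).inv hnc')
  have hT : HasDerivAt (fun v => g v • deriv γ v)
      (g u • deriv (deriv γ) u + deriv g u • deriv γ u) u :=
    hgd.hasDerivAt.smul (hdiff' u).hasDerivAt
  have hDeq : g u • deriv (deriv γ) u + deriv g u • deriv γ u = 0 := by
    rw [← hT.deriv]
    exact hD0
  set l : ℝ := (g u)⁻¹ * (-(deriv g u)) with hldef
  have hc'' : deriv (deriv γ) u = l • deriv γ u := by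
    have h1 : g u • deriv (deriv γ) u = (-(deriv g u)) • deriv γ u := by
      rw [neg_smul]
      exact eq_neg_of_add_eq_zero_left hDeq
    calc deriv (deriv γ) u = (g u)⁻¹ • (g u • deriv (deriv γ) u) := by
          rw [smul_smul, inv_mul_cancel₀ hgu, one_smul]
      _ = (g u)⁻¹ • ((-(deriv g u)) • deriv γ u) := by rw [h1]
      _ = l • deriv γ u := by rw [smul_smul]
  -- projection side
  set w : ℝ → EuclideanSpace ℝ (Fin 2) := fun v => Pxy (deriv γ v) with hwdef
  have hwne : ∀ v, w v ≠ 0 := fun v => hvert v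
  have hwderiv : ∀ v, HasDerivAt (fun x => Pxy (γ x)) (w v) v := fun v =>
    (PxyL.hasFDerivAt.comp_hasDerivAt v (hdiff v).hasDerivAt)
  have hderivbar : ∀ v, deriv (fun x => Pxy (γ x)) v = w v := fun v => (hwderiv v).deriv
  have hw' : HasDerivAt w (l • w u) u := by
    have h1 : HasDerivAt w (PxyL (deriv (deriv γ) u)) u :=
      PxyL.hasFDerivAt.comp_hasDerivAt u (hdiff' u).hasDerivAt
    have h2 : PxyL (deriv (deriv γ) u) = l • w u := by
      rw [hc'', map_smul]; rfl
    rwa [h2] at h1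
  set gb : ℝ → ℝ := fun v => ‖w v‖⁻¹ with hgbdef
  have hnw : ‖w u‖ ≠ 0 := norm_ne_zero_iff.mpr (hwne u)
  have hgbd : DifferentiableAt ℝ gb u :=
    ((hw'.differentiableAt.norm ℝ (hwne u)).inv hnw)
  set μ : ℝ := deriv gb u + gb u * l with hmudef
  have hTbar : HasDerivAt (fun v => gb v • w v) (μ • w u) u := by
    have h1 : HasDerivAt (fun v => gb v • w v)
        (gb u • (l • w u) + deriv gb u • w u) u := hgbd.hasDerivAt.smul hw'
    have h2 : gb u • (l • w u) + deriv gb u • w u = μ • w u := by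
      rw [smul_smul, ← add_smul, hmudef, mul_comm, add_comm]
    rwa [h2] at h1
  -- unit norm
  have hunit : ∀ v, (⟪gb v • w v, gb v • w v⟫ : ℝ) = 1 := by
    intro v
    have h1 : ‖gb v • w v‖ = 1 := by
      rw [norm_smul, Real.norm_eq_abs, abs_of_nonneg (inv_nonneg.mpr (norm_nonneg _)),
        inv_mul_cancel₀ (norm_ne_zero_iff.mpr (hwne v))]
    rw [real_inner_self_eq_norm_mul_norm, h1, one_mul]
  have hinnerD : HasDerivAt (fun v => (⟪gb v • w v, gb v • w v⟫ : ℝ))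
      (⟪gb u • w u, μ • w u⟫ + ⟪μ • w u, gb u • w u⟫) u := hTbar.inner ℝ hTbar
  have hfun : (fun v => (⟪gb v • w v, gb v • w v⟫ : ℝ)) = fun _ => (1:ℝ) :=
    funext hunit
  have hzero : (⟪gb u • w u, μ • w u⟫ : ℝ) + ⟪μ • w u, gb u • w u⟫ = 0 := by
    have h2 : HasDerivAt (fun _ : ℝ => (1:ℝ)) (⟪gb u • w u, μ • w u⟫ + ⟪μ • w u, gb u • w u⟫) u := by
      rw [← hfun]; exact hinnerD
    exact h2.unique (hasDerivAt_const u 1)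
  have hmu0 : μ = 0 := by
    have h3 : (⟪gb u • w u, μ • w u⟫ : ℝ) = μ * (gb u * (‖w u‖ * ‖w u‖)) := by
      rw [real_inner_smul_left, real_inner_smul_right, real_inner_self_eq_norm_mul_norm]
      try ring
    have h4 : (⟪μ • w u, gb u • w u⟫ : ℝ) = μ * (gb u * (‖w u‖ * ‖w u‖)) := by
      rw [real_inner_smul_left, real_inner_smul_right, real_inner_self_eq_norm_mul_norm]
      try ring
    rw [h3, h4] at hzero
    have h5 : gb u * (‖w u‖ * ‖w u‖) ≠ 0 := by
      apply mul_ne_zero (inv_ne_zero hnw) (mul_ne_zero hnw hnw)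
    have h6 : μ * (gb u * (‖w u‖ * ‖w u‖)) = 0 := by linarith
    exact (mul_eq_zero.mp h6).resolve_right h5
  have hTbar0 : HasDerivAt (fun v => gb v • w v) 0 u := by
    rw [hmu0, zero_smul] at hTbar; exact hTbar
  -- conclude
  have habar : aderiv (fun x => Pxy (γ x)) (fun x => Pxy (γ x)) = fun v => gb v • w v := by
    funext v
    show ‖deriv (fun x => Pxy (γ x)) v‖⁻¹ • deriv (fun x => Pxy (γ x)) v = gb v • w v
    rw [hderivbar v]
  have hfinal : aderiv (fun x => Pxy (γ x))
      (aderiv (fun x => Pxy (γ x)) (fun x => Pxy (γ x))) u = 0 := by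
    show ‖deriv (fun x => Pxy (γ x)) u‖⁻¹ •
      deriv (aderiv (fun x => Pxy (γ x)) (fun x => Pxy (γ x))) u = 0
    rw [habar, hTbar0.deriv, smul_zero]
  have := hkbar u
  rw [hfinal, norm_zero] at this
  exact lt_irrefl 0 this
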